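/- Let d ≥ 1, k > 0, α ∈ ℝ, and let v : ℝ^d → ℂ be twice continuously differentiable. For x ≠ 0 write r := |x| and v_r := (x/r)·∇v. Define Lv := k^{−2}Δv + v and M_{r,α}v := x·∇v − i k r v + α v. Then at every x ∈ ℝ^d with x ≠ 0, 2 Re( conj(M_{r,α}v) · Lv ) = ∇·[ 2 k^{−1} Re( conj(M_{r,α}v) · k^{−1}∇v ) + ( |v|² − k^{−2}|∇v|² ) x ] − | k^{−1}v_r − i v |² + (2α − (d−1)) ( |v|² − k^{−2}|∇v|² ) − k^{−2} ( |∇v|² − |v_r|² ). -/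

import Mathlib

open Complex

noncomputable section

/-- Partial derivative (complex-valued) in the `i`-th coordinate direction. -/
def pd (d : ℕ) (i : Fin d) (f : EuclideanSpace ℝ (Fin d) → ℂ) :
    EuclideanSpace ℝ (Fin d) → ℂ :=
  fun x => fderiv ℝ f x (EuclideanSpace.single i 1)

/-- Partial derivative (real-valued) in the `i`-th coordinate direction. -/
def pdR (d : ℕ) (i : Fin d) (f : EuclideanSpace ℝ (Fin d) → ℝ) :
    EuclideanSpace ℝ (Fin d) → ℝ :=
  fun x => fderiv ℝ f x (EuclideanSpace.single i 1)

/-- The Laplacian `Δf = Σᵢ ∂ᵢ²f`. -/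
def lap (d : ℕ) (f : EuclideanSpace ℝ (Fin d) → ℂ) : EuclideanSpace ℝ (Fin d) → ℂ :=
  fun x => ∑ i, pd d i (pd d i f) x

/-- `|∇v|² = Σⱼ |∂ⱼv|²`. -/
def gradSq (d : ℕ) (v : EuclideanSpace ℝ (Fin d) → ℂ) : EuclideanSpace ℝ (Fin d) → ℝ :=
  fun x => ∑ i, ‖pd d i v x‖ ^ 2

/-- The scaled Helmholtz operator `Lv = k⁻²Δv + v`. -/
def Lop (d : ℕ) (k : ℝ) (v : EuclideanSpace ℝ (Fin d) → ℂ) :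
    EuclideanSpace ℝ (Fin d) → ℂ :=
  fun x => ((k ^ 2 : ℝ) : ℂ)⁻¹ * lap d v x + v x

/-- The radial derivative `v_r = (x/r)·∇v`. -/
def radialDeriv (d : ℕ) (v : EuclideanSpace ℝ (Fin d) → ℂ) :
    EuclideanSpace ℝ (Fin d) → ℂ :=
  fun x => (∑ i, (x i : ℂ) * pd d i v x) / ((‖x‖ : ℝ) : ℂ)

/-- The Morawetz–Ludwig multiplier `M_{r,α}v = x·∇v − i k r v + α v` (the case `β = r`). -/
def Mrop (d : ℕ) (k : ℝ) (α : ℝ) (v : EuclideanSpace ℝ (Fin d) → ℂ) :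
    EuclideanSpace ℝ (Fin d) → ℂ :=
  fun x => (∑ i, (x i : ℂ) * pd d i v x) - Complex.I * (k : ℂ) * ((‖x‖ : ℝ) : ℂ) * v x
    + (α : ℂ) * v x

/-- The `j`-th component of the Morawetz flux vector field
`Q_{r,α}(v) = 2 k⁻¹ Re( conj(M_{r,α}v) · k⁻¹∇v ) + ( |v|² − k⁻²|∇v|² ) x`. -/
def fluxR (d : ℕ) (k : ℝ) (α : ℝ) (v : EuclideanSpace ℝ (Fin d) → ℂ) (j : Fin d) :
    EuclideanSpace ℝ (Fin d) → ℝ :=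
  fun x => 2 * k⁻¹ * ((starRingEnd ℂ) (Mrop d k α v x) * (((k⁻¹ : ℝ) : ℂ) * pd d j v x)).re
    + (‖v x‖ ^ 2 - (k⁻¹) ^ 2 * gradSq d v x) * x j

variable {d : ℕ} {v : EuclideanSpace ℝ (Fin d) → ℂ}

lemma cns (z : ℂ) : ‖z‖^2 = z.re^2+z.im^2 := by
  rw [← Complex.normSq_eq_norm_sq, Complex.normSq_apply]; ring

lemma cns' (z : ℂ) : ‖z‖^2 = z.re*z.re+z.im*z.im := by rw [cns]; ring

lemma pd_fold {d : ℕ} (f : EuclideanSpace ℝ (Fin d) → ℂ) (x : EuclideanSpace ℝ (Fin d)) (i : Fin d) :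
    (fderiv ℝ f x) (EuclideanSpace.single i 1) = pd d i f x := rfl

lemma pd_contDiff (hv : ContDiff ℝ 2 v) (i : Fin d) : ContDiff ℝ 1 (pd d i v) :=
  (hv.fderiv_right (by norm_num)).clm_apply contDiff_const

lemma pd_symm (hv : ContDiff ℝ 2 v) (x : EuclideanSpace ℝ (Fin d)) (i j : Fin d) :
    pd d j (pd d i v) x = pd d i (pd d j v) x := by
  have hd2 : DifferentiableAt ℝ (fderiv ℝ v) x :=
    ((hv.fderiv_right (m := 1) (le_refl _)).differentiable (by norm_num)) x
  have key : ∀ i j : Fin d, pd d j (pd d i v) x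
      = fderiv ℝ (fderiv ℝ v) x (EuclideanSpace.single j 1) (EuclideanSpace.single i 1) := by
    intro i j
    show fderiv ℝ (fun y => fderiv ℝ v y (EuclideanSpace.single i 1)) x (EuclideanSpace.single j 1) = _
    rw [fderiv_clm_apply hd2 (differentiableAt_const _)]
    simp
  rw [key, key, (hv.contDiffAt.isSymmSndFDerivAt (by norm_num)).eq]

lemma hasFDerivAt_euclidean_norm (x : EuclideanSpace ℝ (Fin d)) (hx : x ≠ 0) :
    HasFDerivAt (fun y : EuclideanSpace ℝ (Fin d) => ‖y‖) ((‖x‖)⁻¹ • (innerSL ℝ x)) x := by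
  have h1 : HasFDerivAt (fun y : EuclideanSpace ℝ (Fin d) => ‖y‖^2) (2 • innerSL ℝ x) x :=
    (hasStrictFDerivAt_norm_sq x).hasFDerivAt
  have hx0 : ‖x‖ ≠ 0 := norm_ne_zero_iff.mpr hx
  have h2 := h1.sqrt (by positivity)
  have hfun : (fun y : EuclideanSpace ℝ (Fin d) => √(‖y‖^2)) = fun y => ‖y‖ :=
    funext fun y => Real.sqrt_sq (norm_nonneg y)
  rw [hfun] at h2
  refine h2.congr_fderiv ?_
  rw [Real.sqrt_sq (norm_nonneg x)]
  ext u
  simp only [ContinuousLinearMap.smul_apply, smul_eq_mul]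
  field_simp
  ring

lemma flux_deriv (hv : ContDiff ℝ 2 v) (k α : ℝ) (hk : k ≠ 0)
    (x : EuclideanSpace ℝ (Fin d)) (hx : x ≠ 0) (j : Fin d) :
    pdR d j (fluxR d k α v j) x =
      2*k⁻¹*(
        ((∑ i, x i * (pd d i v x).re) + k*‖x‖*(v x).im + α*(v x).re)
            * (k⁻¹*(pd d j (pd d j v) x).re)
      + ((pd d j v x).re + (∑ i, x i * (pd d j (pd d i v) x).re) + k*‖x‖*(pd d j v x).im
            + k*(x j)*‖x‖⁻¹*(v x).im + α*(pd d j v x).re) * (k⁻¹*(pd d j v x).re)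
      + ((∑ i, x i * (pd d i v x).im) - k*‖x‖*(v x).re + α*(v x).im)
            * (k⁻¹*(pd d j (pd d j v) x).im)
      + ((pd d j v x).im + (∑ i, x i * (pd d j (pd d i v) x).im) - k*‖x‖*(pd d j v x).re
            - k*(x j)*‖x‖⁻¹*(v x).re + α*(pd d j v x).im) * (k⁻¹*(pd d j v x).im))
      + ((v x).re*(v x).re + (v x).im*(v x).im
          - k⁻¹^2*((∑ i, (pd d i v x).re*(pd d i v x).re) + (∑ i, (pd d i v x).im*(pd d i v x).im)))
      + x j * (2*(v x).re*(pd d j v x).re + 2*(v x).im*(pd d j v x).im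
          - k⁻¹^2*( 2*(∑ i, (pd d i v x).re*(pd d j (pd d i v) x).re)
                  + 2*(∑ i, (pd d i v x).im*(pd d j (pd d i v) x).im))) := by
  have hv1 : Differentiable ℝ v := hv.differentiable (by norm_num)
  have hVa : HasFDerivAt (fun y => (v y).re) (Complex.reCLM.comp (fderiv ℝ v x)) x :=
    (Complex.reCLM.hasFDerivAt).comp x (hv1 x).hasFDerivAt
  have hVb : HasFDerivAt (fun y => (v y).im) (Complex.imCLM.comp (fderiv ℝ v x)) x :=
    (Complex.imCLM.hasFDerivAt).comp x (hv1 x).hasFDerivAt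
  have hpdd : ∀ i : Fin d, DifferentiableAt ℝ (pd d i v) x := fun i =>
    ((pd_contDiff hv i).differentiable (by norm_num)) x
  have hPa : ∀ i : Fin d, HasFDerivAt (fun y => (pd d i v y).re)
      (Complex.reCLM.comp (fderiv ℝ (pd d i v) x)) x := fun i =>
    (Complex.reCLM.hasFDerivAt).comp x (hpdd i).hasFDerivAt
  have hPb : ∀ i : Fin d, HasFDerivAt (fun y => (pd d i v y).im)
      (Complex.imCLM.comp (fderiv ℝ (pd d i v) x)) x := fun i =>
    (Complex.imCLM.hasFDerivAt).comp x (hpdd i).hasFDerivAt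
  have hcoord : ∀ i : Fin d, HasFDerivAt (fun y : EuclideanSpace ℝ (Fin d) => y i)
      (EuclideanSpace.proj (𝕜 := ℝ) i) x := fun i => (EuclideanSpace.proj (𝕜 := ℝ) i).hasFDerivAt
  have hN := hasFDerivAt_euclidean_norm x hx
  have hform : fluxR d k α v j = fun y =>
      2*k⁻¹ * ( ((∑ i, y i * (pd d i v y).re) + k*‖y‖*(v y).im + α*(v y).re)
                  * (k⁻¹*(pd d j v y).re)
              + ((∑ i, y i * (pd d i v y).im) - k*‖y‖*(v y).re + α*(v y).im)
                  * (k⁻¹*(pd d j v y).im) )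
      + (((v y).re*(v y).re + (v y).im*(v y).im)
          - k⁻¹^2 * ∑ i, ((pd d i v y).re*(pd d i v y).re + (pd d i v y).im*(pd d i v y).im)) * y j := by
    funext y
    simp only [fluxR, Mrop, gradSq, cns', Complex.mul_re, Complex.mul_im, Complex.add_re,
      Complex.add_im, Complex.sub_re, Complex.sub_im, Complex.conj_re, Complex.conj_im,
      Complex.ofReal_re, Complex.ofReal_im, Complex.I_re, Complex.I_im, Complex.re_sum,
      Complex.im_sum, zero_mul, mul_zero, sub_zero, zero_sub, add_zero, zero_add, neg_mul,
      one_mul, mul_one, neg_neg, mul_neg, neg_add_rev]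
    ring
  have sumA := HasFDerivAt.sum (u := (Finset.univ : Finset (Fin d)))
      (fun i _ => (hcoord i).mul (hPa i))
  have sumB := HasFDerivAt.sum (u := (Finset.univ : Finset (Fin d)))
      (fun i _ => (hcoord i).mul (hPb i))
  have hD := ((((sumA.add ((hN.const_mul k).mul hVb)).add (hVa.const_mul α)).mul
      ((hPa j).const_mul k⁻¹)).add
      ((((sumB.sub ((hN.const_mul k).mul hVa)).add (hVb.const_mul α)).mul
      ((hPb j).const_mul k⁻¹)))).const_mul (2*k⁻¹) |>.add
      ((((hVa.mul hVa).add (hVb.mul hVb)).sub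
        ((HasFDerivAt.sum (u := (Finset.univ : Finset (Fin d)))
          (fun i _ => ((hPa i).mul (hPa i)).add ((hPb i).mul (hPb i)))).const_mul (k⁻¹^2))).mul (hcoord j))
  show fderiv ℝ (fluxR d k α v j) x (EuclideanSpace.single j 1) = _
  have hD2 := hD.congr_of_eventuallyEq (f₁ := fluxR d k α v j) (Filter.Eventually.of_forall fun y => by
    rw [hform]; simp only [Pi.mul_apply, Pi.add_apply, Pi.sub_apply, Finset.sum_apply])
  rw [hD2.fderiv]
  simp only [ContinuousLinearMap.add_apply, ContinuousLinearMap.smul_apply,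
    ContinuousLinearMap.sub_apply, ContinuousLinearMap.coe_sum', Finset.sum_apply,
    ContinuousLinearMap.comp_apply, Complex.reCLM_apply, Complex.imCLM_apply,
    PiLp.proj_apply, innerSL_apply_apply, smul_eq_mul,
    EuclideanSpace.single_apply, mul_ite, mul_one, mul_zero,
    Finset.sum_add_distrib, Finset.sum_ite_eq', Finset.mem_univ, if_true,
    EuclideanSpace.inner_single_right, starRingEnd_apply, star_trivial, pd_fold,
    Pi.mul_apply, Pi.add_apply, Pi.sub_apply]
  ring

lemma key_swap_re (hv : ContDiff ℝ 2 v) (x : EuclideanSpace ℝ (Fin d)) :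
    ∑ j, (∑ i, x i * (pd d j (pd d i v) x).re) * (pd d j v x).re
      = ∑ j, x j * (∑ i, (pd d i v x).re * (pd d j (pd d i v) x).re) := by
  calc ∑ j, (∑ i, x i * (pd d j (pd d i v) x).re) * (pd d j v x).re
      = ∑ j, ∑ i, x i * (pd d j (pd d i v) x).re * (pd d j v x).re := by
        simp [Finset.sum_mul]
    _ = ∑ i, ∑ j, x i * (pd d j (pd d i v) x).re * (pd d j v x).re := Finset.sum_comm
    _ = ∑ i, ∑ j, x i * (pd d i (pd d j v) x).re * (pd d j v x).re := by
        refine Finset.sum_congr rfl fun i _ => Finset.sum_congr rfl fun j _ => by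
          rw [pd_symm hv]
    _ = ∑ j, x j * (∑ i, (pd d i v x).re * (pd d j (pd d i v) x).re) := by
        simp only [Finset.mul_sum]
        exact Finset.sum_congr rfl fun u _ => Finset.sum_congr rfl fun w _ => by ring

lemma key_swap_im (hv : ContDiff ℝ 2 v) (x : EuclideanSpace ℝ (Fin d)) :
    ∑ j, (∑ i, x i * (pd d j (pd d i v) x).im) * (pd d j v x).im
      = ∑ j, x j * (∑ i, (pd d i v x).im * (pd d j (pd d i v) x).im) := by
  calc ∑ j, (∑ i, x i * (pd d j (pd d i v) x).im) * (pd d j v x).im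
      = ∑ j, ∑ i, x i * (pd d j (pd d i v) x).im * (pd d j v x).im := by
        simp [Finset.sum_mul]
    _ = ∑ i, ∑ j, x i * (pd d j (pd d i v) x).im * (pd d j v x).im := Finset.sum_comm
    _ = ∑ i, ∑ j, x i * (pd d i (pd d j v) x).im * (pd d j v x).im := by
        refine Finset.sum_congr rfl fun i _ => Finset.sum_congr rfl fun j _ => by
          rw [pd_symm hv]
    _ = ∑ j, x j * (∑ i, (pd d i v x).im * (pd d j (pd d i v) x).im) := by
        simp only [Finset.mul_sum]
        exact Finset.sum_congr rfl fun u _ => Finset.sum_congr rfl fun w _ => by ring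


/-- **Morawetz–Ludwig identity** (the special case `β = r` of the Morawetz identity).
For `v ∈ C²(ℝ^d, ℂ)`, `k > 0`, `α ∈ ℝ`, at every `x ≠ 0`,
`2 Re( conj(M_{r,α}v) Lv ) = ∇·Q_{r,α}(v) − |k⁻¹v_r − iv|²
 + (2α − (d−1))(|v|² − k⁻²|∇v|²) − k⁻²(|∇v|² − |v_r|²)`. -/
theorem morawetz_ludwig_identity
    {d : ℕ} (hd : 1 ≤ d) (k : ℝ) (hk : 0 < k) (α : ℝ)
    (v : EuclideanSpace ℝ (Fin d) → ℂ) (hv : ContDiff ℝ 2 v)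
    (x : EuclideanSpace ℝ (Fin d)) (hx : x ≠ 0) :
    2 * ((starRingEnd ℂ) (Mrop d k α v x) * Lop d k v x).re
      = (∑ j, pdR d j (fluxR d k α v j) x)
        - ‖((k⁻¹ : ℝ) : ℂ) * radialDeriv d v x - Complex.I * v x‖ ^ 2
        + (2 * α - ((d : ℝ) - 1)) * (‖v x‖ ^ 2 - (k⁻¹) ^ 2 * gradSq d v x)
        - (k⁻¹) ^ 2 * (gradSq d v x - ‖radialDeriv d v x‖ ^ 2) := by

  have hk0 : k ≠ 0 := ne_of_gt hk
  have hr0 : ‖x‖ ≠ 0 := norm_ne_zero_iff.mpr hx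
  -- the divergence term
  have hstep : ∑ j, pdR d j (fluxR d k α v j) x = ∑ j, (2*k⁻¹*(
        ((∑ i, x i * (pd d i v x).re) + k*‖x‖*(v x).im + α*(v x).re)
            * (k⁻¹*(pd d j (pd d j v) x).re)
      + ((pd d j v x).re + (∑ i, x i * (pd d j (pd d i v) x).re) + k*‖x‖*(pd d j v x).im
            + k*(x j)*‖x‖⁻¹*(v x).im + α*(pd d j v x).re) * (k⁻¹*(pd d j v x).re)
      + ((∑ i, x i * (pd d i v x).im) - k*‖x‖*(v x).re + α*(v x).im)
            * (k⁻¹*(pd d j (pd d j v) x).im)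
      + ((pd d j v x).im + (∑ i, x i * (pd d j (pd d i v) x).im) - k*‖x‖*(pd d j v x).re
            - k*(x j)*‖x‖⁻¹*(v x).re + α*(pd d j v x).im) * (k⁻¹*(pd d j v x).im))
      + ((v x).re*(v x).re + (v x).im*(v x).im
          - k⁻¹^2*((∑ i, (pd d i v x).re*(pd d i v x).re) + (∑ i, (pd d i v x).im*(pd d i v x).im)))
      + x j * (2*(v x).re*(pd d j v x).re + 2*(v x).im*(pd d j v x).im
          - k⁻¹^2*( 2*(∑ i, (pd d i v x).re*(pd d j (pd d i v) x).re)
                  + 2*(∑ i, (pd d i v x).im*(pd d j (pd d i v) x).im)))) :=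
    Finset.sum_congr rfl (fun j _ => flux_deriv hv k α hk0 x hx j)
  -- decompose the summand into sum-friendly pieces
  have hEj : ∀ j : Fin d, (2*k⁻¹*(
        ((∑ i, x i * (pd d i v x).re) + k*‖x‖*(v x).im + α*(v x).re)
            * (k⁻¹*(pd d j (pd d j v) x).re)
      + ((pd d j v x).re + (∑ i, x i * (pd d j (pd d i v) x).re) + k*‖x‖*(pd d j v x).im
            + k*(x j)*‖x‖⁻¹*(v x).im + α*(pd d j v x).re) * (k⁻¹*(pd d j v x).re)
      + ((∑ i, x i * (pd d i v x).im) - k*‖x‖*(v x).re + α*(v x).im)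
            * (k⁻¹*(pd d j (pd d j v) x).im)
      + ((pd d j v x).im + (∑ i, x i * (pd d j (pd d i v) x).im) - k*‖x‖*(pd d j v x).re
            - k*(x j)*‖x‖⁻¹*(v x).re + α*(pd d j v x).im) * (k⁻¹*(pd d j v x).im))
      + ((v x).re*(v x).re + (v x).im*(v x).im
          - k⁻¹^2*((∑ i, (pd d i v x).re*(pd d i v x).re) + (∑ i, (pd d i v x).im*(pd d i v x).im)))
      + x j * (2*(v x).re*(pd d j v x).re + 2*(v x).im*(pd d j v x).im
          - k⁻¹^2*( 2*(∑ i, (pd d i v x).re*(pd d j (pd d i v) x).re)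
                  + 2*(∑ i, (pd d i v x).im*(pd d j (pd d i v) x).im)))) =
      (2*k⁻¹*k⁻¹)*(((∑ i, x i * (pd d i v x).re) + k*‖x‖*(v x).im + α*(v x).re)
          * (pd d j (pd d j v) x).re
        + ((∑ i, x i * (pd d i v x).im) - k*‖x‖*(v x).re + α*(v x).im)
          * (pd d j (pd d j v) x).im)
      + (2*k⁻¹*k⁻¹*(1+α))*((pd d j v x).re*(pd d j v x).re + (pd d j v x).im*(pd d j v x).im)
      + (2*k*k⁻¹*k⁻¹*‖x‖⁻¹)*((v x).im*(x j*(pd d j v x).re) - (v x).re*(x j*(pd d j v x).im))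
      + (2*k⁻¹*k⁻¹)*((∑ i, x i * (pd d j (pd d i v) x).re)*(pd d j v x).re
          - x j*(∑ i, (pd d i v x).re*(pd d j (pd d i v) x).re))
      + (2*k⁻¹*k⁻¹)*((∑ i, x i * (pd d j (pd d i v) x).im)*(pd d j v x).im
          - x j*(∑ i, (pd d i v x).im*(pd d j (pd d i v) x).im))
      + ((v x).re*(v x).re + (v x).im*(v x).im
          - k⁻¹^2*((∑ i, (pd d i v x).re*(pd d i v x).re) + (∑ i, (pd d i v x).im*(pd d i v x).im)))
      + 2*(v x).re*(x j*(pd d j v x).re) + 2*(v x).im*(x j*(pd d j v x).im) := by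
    intro j; ring
  rw [hstep, Finset.sum_congr rfl (fun j _ => hEj j)]
  -- split the sum
  simp only [Finset.sum_add_distrib]
  rw [show ∑ j, (2*k⁻¹*k⁻¹)*((∑ i, x i * (pd d j (pd d i v) x).re)*(pd d j v x).re
        - x j*(∑ i, (pd d i v x).re*(pd d j (pd d i v) x).re)) = 0 by
      rw [← Finset.mul_sum, Finset.sum_sub_distrib, sub_eq_zero.mpr (key_swap_re hv x), mul_zero]]
  rw [show ∑ j, (2*k⁻¹*k⁻¹)*((∑ i, x i * (pd d j (pd d i v) x).im)*(pd d j v x).im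
        - x j*(∑ i, (pd d i v x).im*(pd d j (pd d i v) x).im)) = 0 by
      rw [← Finset.mul_sum, Finset.sum_sub_distrib, sub_eq_zero.mpr (key_swap_im hv x), mul_zero]]
  simp only [Finset.sum_add_distrib, Finset.sum_sub_distrib, ← Finset.mul_sum,
    Finset.sum_const, Finset.card_univ, Fintype.card_fin, nsmul_eq_mul]
  -- now handle the analytic quantities on both sides
  have hL : 2 * ((starRingEnd ℂ) (Mrop d k α v x) * Lop d k v x).re
      = 2*(((∑ i, x i * (pd d i v x).re) + k*‖x‖*(v x).im + α*(v x).re)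
            * ((k^2)⁻¹ * (∑ i, (pd d i (pd d i v) x).re) + (v x).re)
        + ((∑ i, x i * (pd d i v x).im) - k*‖x‖*(v x).re + α*(v x).im)
            * ((k^2)⁻¹ * (∑ i, (pd d i (pd d i v) x).im) + (v x).im)) := by
    simp only [Mrop, Lop, lap, ← Complex.ofReal_inv, Complex.mul_re, Complex.mul_im,
      Complex.add_re, Complex.add_im, Complex.sub_re, Complex.sub_im, Complex.conj_re,
      Complex.conj_im, Complex.ofReal_re, Complex.ofReal_im, Complex.I_re, Complex.I_im,
      Complex.re_sum, Complex.im_sum, zero_mul, mul_zero, sub_zero, zero_sub, add_zero,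
      zero_add, neg_mul, one_mul, mul_one, neg_neg, mul_neg, neg_add_rev]
    ring
  have hrad : ‖radialDeriv d v x‖^2
      = ((∑ i, x i * (pd d i v x).re)*(∑ i, x i * (pd d i v x).re)
        + (∑ i, x i * (pd d i v x).im)*(∑ i, x i * (pd d i v x).im))*(‖x‖⁻¹*‖x‖⁻¹) := by
    rw [cns']
    simp only [radialDeriv, div_eq_mul_inv, ← Complex.ofReal_inv, Complex.mul_re, Complex.mul_im,
      Complex.ofReal_re, Complex.ofReal_im, Complex.re_sum, Complex.im_sum, zero_mul, mul_zero,
      sub_zero, add_zero]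
    ring
  have hrad2 : ‖((k⁻¹ : ℝ) : ℂ) * radialDeriv d v x - Complex.I * v x‖^2
      = (k⁻¹*((∑ i, x i * (pd d i v x).re)*‖x‖⁻¹) + (v x).im)^2
      + (k⁻¹*((∑ i, x i * (pd d i v x).im)*‖x‖⁻¹) - (v x).re)^2 := by
    rw [cns']
    simp only [radialDeriv, div_eq_mul_inv, ← Complex.ofReal_inv, Complex.mul_re, Complex.mul_im,
      Complex.sub_re, Complex.sub_im, Complex.ofReal_re, Complex.ofReal_im, Complex.I_re,
      Complex.I_im, Complex.re_sum, Complex.im_sum, zero_mul, mul_zero, sub_zero, add_zero,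
      zero_sub, zero_add, one_mul]
    ring
  have hgrad : gradSq d v x = (∑ i, (pd d i v x).re*(pd d i v x).re)
      + (∑ i, (pd d i v x).im*(pd d i v x).im) := by
    simp only [gradSq, cns', Finset.sum_add_distrib]
  have hvn : ‖v x‖^2 = (v x).re*(v x).re + (v x).im*(v x).im := cns' _
  rw [hL, hrad, hrad2, hgrad, hvn]
  have hkk : (k^2)⁻¹ = k⁻¹*k⁻¹ := by rw [sq, mul_inv]
  have hkc : k*k⁻¹ = 1 := mul_inv_cancel₀ hk0
  have hrc : ‖x‖*‖x‖⁻¹ = 1 := mul_inv_cancel₀ hr0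
  rw [hkk]
  field_simp
  ring


end
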